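/- Let f be a smooth function satisfying the linear Weingarten relation a·(f_uu+f_vv)/2 + b·(f_uu f_vv - f_uv²) = 0 for constants a,b, and set n(u,v) = (a/2)(u²+v²) + b·f(u,v). Then: (1) the mixed Gaussian curvature f_uu n_vv - 2 f_uv n_uv + f_vv n_uu vanishes identically, so V = (-v,u,n) is a velocity diagram of an infinitesimal isometry of F = (u,v,f); and (2) n satisfies the Weingarten relation -a·(n_uu+n_vv)/2 + (n_uu n_vv - n_uv²) = 0. -/

import Mathlib

noncomputable section

/-- Partial derivative in the `u` direction. -/
def pu {E : Type*} [NormedAddCommGroup E] [NormedSpace ℝ E]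
    (f : ℝ × ℝ → E) (p : ℝ × ℝ) : E := fderiv ℝ f p (1, 0)

/-- Partial derivative in the `v` direction. -/
def pv {E : Type*} [NormedAddCommGroup E] [NormedSpace ℝ E]
    (f : ℝ × ℝ → E) (p : ℝ × ℝ) : E := fderiv ℝ f p (0, 1)

/-- Dot product in the plane. -/
def dot2 (a b : ℝ × ℝ) : ℝ := a.1 * b.1 + a.2 * b.2

/-- Dot product in space. -/
def dot3 (a b : ℝ × ℝ × ℝ) : ℝ := a.1 * b.1 + a.2.1 * b.2.1 + a.2.2 * b.2.2

/-- Determinant of three vectors in space. -/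
def det3 (a b c : ℝ × ℝ × ℝ) : ℝ :=
  a.1 * (b.2.1 * c.2.2 - b.2.2 * c.2.1)
    - a.2.1 * (b.1 * c.2.2 - b.2.2 * c.1)
    + a.2.2 * (b.1 * c.2.1 - b.2.1 * c.1)

/-- Top view of a space vector. -/
def tv (w : ℝ × ℝ × ℝ) : ℝ × ℝ := (w.1, w.2.1)

/-- Isotropic Gaussian curvature of a general parametrized surface. -/
def Kgen (g : ℝ × ℝ → ℝ × ℝ × ℝ) (p : ℝ × ℝ) : ℝ :=
  (det3 (pu g p) (pv g p) (pu (pu g) p) * det3 (pu g p) (pv g p) (pv (pv g) p)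
      - (det3 (pu g p) (pv g p) (pv (pu g) p)) ^ 2) /
    (dot2 (tv (pu g p)) (tv (pu g p)) * dot2 (tv (pv g p)) (tv (pv g p))
      - (dot2 (tv (pu g p)) (tv (pv g p))) ^ 2)

/-- Isotropic mean curvature of a general parametrized surface. -/
def Hgen (g : ℝ × ℝ → ℝ × ℝ × ℝ) (p : ℝ × ℝ) : ℝ :=
  (dot2 (tv (pu g p)) (tv (pu g p)) * det3 (pu g p) (pv g p) (pv (pv g) p)
      - 2 * dot2 (tv (pu g p)) (tv (pv g p)) * det3 (pu g p) (pv g p) (pv (pu g) p)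
      + dot2 (tv (pv g p)) (tv (pv g p)) * det3 (pu g p) (pv g p) (pu (pu g) p)) /
    (2 * (dot2 (tv (pu g p)) (tv (pu g p)) * dot2 (tv (pv g p)) (tv (pv g p))
      - (dot2 (tv (pu g p)) (tv (pv g p))) ^ 2))

/-- Isotropic Gaussian curvature of a graph surface `(u,v,f(u,v))`. -/
def Kgr (f : ℝ × ℝ → ℝ) (p : ℝ × ℝ) : ℝ :=
  pu (pu f) p * pv (pv f) p - (pv (pu f) p) ^ 2

/-- Isotropic mean curvature of a graph surface. -/
def Hgr (f : ℝ × ℝ → ℝ) (p : ℝ × ℝ) : ℝ :=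
  (pu (pu f) p + pv (pv f) p) / 2

/-- Mixed isotropic Gaussian curvature of two graph surfaces. -/
def Kmix (f g : ℝ × ℝ → ℝ) (p : ℝ × ℝ) : ℝ :=
  (pu (pu f) p * pv (pv g) p - 2 * pv (pu f) p * pv (pu g) p
    + pv (pv f) p * pu (pu g) p) / 2



lemma contDiff_pu' (f : ℝ × ℝ → ℝ) (hf : ContDiff ℝ (⊤ : ℕ∞) f) : ContDiff ℝ (⊤ : ℕ∞) (pu f) :=
  ((hf.fderiv_right (le_refl _)).clm_apply contDiff_const)

lemma contDiff_pv' (f : ℝ × ℝ → ℝ) (hf : ContDiff ℝ (⊤ : ℕ∞) f) : ContDiff ℝ (⊤ : ℕ∞) (pv f) :=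
  ((hf.fderiv_right (le_refl _)).clm_apply contDiff_const)

lemma n_deriv' (a b : ℝ) (f : ℝ × ℝ → ℝ) (hf : ContDiff ℝ (⊤ : ℕ∞) f) (p : ℝ × ℝ) (w : ℝ × ℝ) :
    fderiv ℝ (fun q : ℝ × ℝ => a / 2 * (q.1 ^ 2 + q.2 ^ 2) + b * f q) p w
      = a * p.1 * w.1 + a * p.2 * w.2 + b * fderiv ℝ f p w := by
  have h1 : HasFDerivAt (fun q : ℝ × ℝ => q.1 ^ 2)
      (p.1 • (ContinuousLinearMap.fst ℝ ℝ ℝ) + p.1 • (ContinuousLinearMap.fst ℝ ℝ ℝ)) p := by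
    simpa [pow_two] using (hasFDerivAt_fst (𝕜 := ℝ) (p := p)).fun_mul (hasFDerivAt_fst (𝕜 := ℝ) (p := p))
  have h2 : HasFDerivAt (fun q : ℝ × ℝ => q.2 ^ 2)
      (p.2 • (ContinuousLinearMap.snd ℝ ℝ ℝ) + p.2 • (ContinuousLinearMap.snd ℝ ℝ ℝ)) p := by
    simpa [pow_two] using (hasFDerivAt_snd (𝕜 := ℝ) (p := p)).fun_mul (hasFDerivAt_snd (𝕜 := ℝ) (p := p))
  have hF := (hf.differentiable (by simp) p).hasFDerivAt
  have h := (((h1.fun_add h2).const_mul (a / 2)).fun_add (hF.const_mul b))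
  rw [h.fderiv]
  simp
  ring

lemma lin_deriv' (a b : ℝ) (g : ℝ × ℝ → ℝ) (hg : ContDiff ℝ (⊤ : ℕ∞) g)
    (c : ℝ × ℝ → ℝ) (hc : ∀ q : ℝ × ℝ, c q = a * q.1 + b * g q) (p w : ℝ × ℝ) :
    fderiv ℝ c p w = a * w.1 + b * fderiv ℝ g p w := by
  have h : HasFDerivAt c (a • (ContinuousLinearMap.fst ℝ ℝ ℝ) + b • fderiv ℝ g p) p := by
    have h0 := ((hasFDerivAt_fst (𝕜 := ℝ) (p := p)).const_mul a).fun_add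
      (((hg.differentiable (by simp) p).hasFDerivAt).const_mul b)
    have h1 : HasFDerivAt (fun x : ℝ × ℝ => a * x.1 + b * g x)
        (a • (ContinuousLinearMap.fst ℝ ℝ ℝ) + b • fderiv ℝ g p) p := by
      convert h0 using 1
    exact h1.congr_of_eventuallyEq (by filter_upwards with q using hc q)
  rw [h.fderiv]; simp [mul_comm]

lemma lin_deriv2' (a b : ℝ) (g : ℝ × ℝ → ℝ) (hg : ContDiff ℝ (⊤ : ℕ∞) g)
    (c : ℝ × ℝ → ℝ) (hc : ∀ q : ℝ × ℝ, c q = a * q.2 + b * g q) (p w : ℝ × ℝ) :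
    fderiv ℝ c p w = a * w.2 + b * fderiv ℝ g p w := by
  have h : HasFDerivAt c (a • (ContinuousLinearMap.snd ℝ ℝ ℝ) + b • fderiv ℝ g p) p := by
    have h0 := ((hasFDerivAt_snd (𝕜 := ℝ) (p := p)).const_mul a).fun_add
      (((hg.differentiable (by simp) p).hasFDerivAt).const_mul b)
    have h1 : HasFDerivAt (fun x : ℝ × ℝ => a * x.2 + b * g x)
        (a • (ContinuousLinearMap.snd ℝ ℝ ℝ) + b • fderiv ℝ g p) p := by
      convert h0 using 1
    exact h1.congr_of_eventuallyEq (by filter_upwards with q using hc q)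
  rw [h.fderiv]; simp [mul_comm]

/-- If `f` satisfies the linear Weingarten relation `a H(F) + b K(F) = 0` and
`n = (a/2)(u² + v²) + b f`, then (1) the mixed Gaussian curvature of `F` and
`V = (-v,u,n)` vanishes identically, so `V` is a velocity diagram of an
infinitesimal isometry of `F`; and (2) `n` satisfies the Weingarten relation
`-a H(V) + K(V) = 0`. -/
theorem stmt_19 (f n : ℝ × ℝ → ℝ) (a b : ℝ)
    (hf : ContDiff ℝ (⊤ : ℕ∞) f)
    (hW : ∀ p : ℝ × ℝ,
      a * ((pu (pu f) p + pv (pv f) p) / 2)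
        + b * (pu (pu f) p * pv (pv f) p - (pv (pu f) p) ^ 2) = 0)
    (hdefn : n = fun q => a / 2 * (q.1 ^ 2 + q.2 ^ 2) + b * f q) :
    (∀ p : ℝ × ℝ,
      pu (pu f) p * pv (pv n) p - 2 * pv (pu f) p * pv (pu n) p
        + pv (pv f) p * pu (pu n) p = 0) ∧
    (∀ p : ℝ × ℝ,
      -a * ((pu (pu n) p + pv (pv n) p) / 2)
        + (pu (pu n) p * pv (pv n) p - (pv (pu n) p) ^ 2) = 0) := by

  have hpu : ∀ q : ℝ × ℝ, pu n q = a * q.1 + b * pu f q := by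
    intro q; rw [hdefn]; unfold pu; rw [n_deriv' a b f hf]; simp
  have hpv : ∀ q : ℝ × ℝ, pv n q = a * q.2 + b * pv f q := by
    intro q; rw [hdefn]; unfold pv; rw [n_deriv' a b f hf]; simp
  have hpuf := contDiff_pu' f hf
  have hpvf := contDiff_pv' f hf
  have huu : ∀ p : ℝ × ℝ, pu (pu n) p = a + b * pu (pu f) p := by
    intro p
    simpa [pu] using lin_deriv' a b (pu f) hpuf (pu n) hpu p (1, 0)
  have huv : ∀ p : ℝ × ℝ, pv (pu n) p = b * pv (pu f) p := by
    intro p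
    simpa [pu, pv] using lin_deriv' a b (pu f) hpuf (pu n) hpu p (0, 1)
  have hvv : ∀ p : ℝ × ℝ, pv (pv n) p = a + b * pv (pv f) p := by
    intro p
    simpa [pv] using lin_deriv2' a b (pv f) hpvf (pv n) hpv p (0, 1)
  constructor
  · intro p
    rw [huu, huv, hvv]
    linear_combination 2 * hW p
  · intro p
    rw [huu, huv, hvv]
    linear_combination b * hW p


end
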